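/- Let z ∈ ℝ⁴ be space-like, u ∈ ℝ⁴ time-like, ε > 0, and w = z + iεu. With r(w) = √(-w_μ w^μ) (principal branch), one has max(r(z), ε√(u_μu^μ)) ≤ √(-z_μz^μ + ε² u_μu^μ) ≤ Re r(w) ≤ |r(w)|. -/
import Mathlib


open Complex

/-- Minkowski quadratic form `w_μ w^μ` on `ℂ⁴`, metric `diag(1,-1,-1,-1)`. -/
noncomputable def minkC (w : Fin 4 → ℂ) : ℂ :=
  w 0 ^ 2 - w 1 ^ 2 - w 2 ^ 2 - w 3 ^ 2

/-- Minkowski quadratic form `z_μ z^μ` on `ℝ⁴`. -/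
def minkR (z : Fin 4 → ℝ) : ℝ :=
  z 0 ^ 2 - z 1 ^ 2 - z 2 ^ 2 - z 3 ^ 2

/-- `r(w) = √(-w_μ w^μ)` with the principal branch of the square root. -/
noncomputable def rC (w : Fin 4 → ℂ) : ℂ :=
  (-minkC w) ^ ((1 : ℂ) / 2)

lemma re_cpow_half_nonneg (c : ℂ) : 0 ≤ (c ^ ((1 : ℂ) / 2)).re := by
  rcases eq_or_ne c 0 with rfl | hc
  · simp [Complex.zero_cpow (by norm_num : (1:ℂ)/2 ≠ 0)]
  · rw [Complex.cpow_def_of_ne_zero hc]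
    rw [Complex.exp_re]
    apply mul_nonneg (Real.exp_nonneg _)
    apply Real.cos_nonneg_of_mem_Icc
    constructor
    · simp [Complex.mul_im, Complex.log_im, Complex.log_re]
      nlinarith [Complex.neg_pi_lt_arg c, Real.pi_pos]
    · simp [Complex.mul_im, Complex.log_im, Complex.log_re]
      nlinarith [Complex.arg_le_pi c, Real.pi_pos]

/-- For `z` space-like, `u` time-like, `ε > 0`, and `w = z + iεu`:
`max(r(z), ε√(u_μu^μ)) ≤ √(-z_μz^μ + ε² u_μu^μ) ≤ Re r(w) ≤ |r(w)|`. -/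
theorem rC_lower_bounds (z u : Fin 4 → ℝ) (hz : minkR z < 0) (hu : 0 < minkR u)
    (ε : ℝ) (hε : 0 < ε) :
    max (Real.sqrt (-minkR z)) (ε * Real.sqrt (minkR u))
        ≤ Real.sqrt (-minkR z + ε ^ 2 * minkR u) ∧
      Real.sqrt (-minkR z + ε ^ 2 * minkR u)
        ≤ (rC (fun μ => (z μ : ℂ) + (ε : ℂ) * (u μ : ℂ) * Complex.I)).re ∧
      (rC (fun μ => (z μ : ℂ) + (ε : ℂ) * (u μ : ℂ) * Complex.I)).re
        ≤ ‖rC (fun μ => (z μ : ℂ) + (ε : ℂ) * (u μ : ℂ) * Complex.I)‖ := by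
  set a : ℝ := -minkR z + ε ^ 2 * minkR u with ha
  have ha0 : 0 < a := by have := mul_pos (pow_pos hε 2) hu; linarith
  set c : ℂ := -minkC (fun μ => (z μ : ℂ) + (ε : ℂ) * (u μ : ℂ) * Complex.I) with hcdef
  have hcre : c.re = a := by
    simp only [hcdef, minkC, minkR, ha]
    simp [Complex.sub_re, Complex.add_re, Complex.mul_re, Complex.mul_im, pow_two]
    ring
  have hcne : c ≠ 0 := fun h => by simp [h] at hcre; linarith
  set s : ℂ := rC (fun μ => (z μ : ℂ) + (ε : ℂ) * (u μ : ℂ) * Complex.I) with hsdef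
  have hs2 : s ^ 2 = c := by
    rw [hsdef, rC, one_div, ← hcdef]
    exact Complex.cpow_ofNat_inv_pow c 2
  have hsre : 0 ≤ s.re := re_cpow_half_nonneg c
  have hkey : a ≤ s.re ^ 2 := by
    have : (s ^ 2).re = s.re ^ 2 - s.im ^ 2 := by
      simp [pow_two, Complex.mul_re]
    rw [hs2, hcre] at this
    nlinarith [sq_nonneg s.im]
  refine ⟨?_, ?_, Complex.re_le_norm s⟩
  · apply max_le
    · apply Real.sqrt_le_sqrt; nlinarith
    · rw [show ε * Real.sqrt (minkR u) = Real.sqrt (ε ^ 2 * minkR u) by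
        rw [Real.sqrt_mul (by positivity), Real.sqrt_sq hε.le]]
      apply Real.sqrt_le_sqrt; linarith
  · calc Real.sqrt a ≤ Real.sqrt (s.re ^ 2) := Real.sqrt_le_sqrt hkey
      _ = s.re := Real.sqrt_sq hsre
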